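/- Change of variables for abstract iterated integrals: for group-like series s, t ∈ G(A) and n₁ ≥ 0, n₂ ≥ 1, the pairing of the product series st against the half-shuffle element satisfies (st)^(1_{n₁} ≻ 1_{n₂}) − ŝ(1_{n₁} ≻ 1_{n₂}) = Σ_{k₁=0}^{n₁} Σ_{k₂=0}^{n₂−1} ρ_{k₂,n₁−k₁} · conc( ŝ(1_{k₁} *′ 1_{k₂}) ⊗ t̂(1_{n₁−k₁} ≻ 1_{n₂−k₂}) ), where ρ_{k₂,n₁−k₁} ∈ S_{n₁+n₂} swaps the blocks (k₁+1,…,k₁+k₂) and (k₁+k₂+1,…,n₁+k₂) in (1,…,n₁+n₂). -/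

import Mathlib

/-!
Write `1_{n₁} ≻ 1_{n₂}` as the shuffles of `1_{n₁}` with the shifted `1_{n₂ - 1}`, each
followed by the last letter `n₁ + n₂ - 1`. Because `t` takes the value `1` on the empty word,
`(st - s)` at such a word is the sum over its cuts that leave the last letter on the right,
`s(prefix) · t(suffix)`. Deconcatenation is compatible with the shuffle product: cutting a
shuffle of `u` and `v` is the same as shuffling a cut of `u` with a cut of `v` on each side.
The left pieces, relabelled, are the words of `1_{k₁} *′ 1_{k₂}`; the right pieces, followed by
the last letter, are the words of `1_{n₁-k₁} ≻ 1_{n₂-k₂}`; and the block swap `ρ_{k₂,n₁-k₁}`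
moves the positions read by the left factor (the first `k₁`, and the first `k₂` after `n₁`)
to the front.
-/

def shuffle {A : Type*} : List A → List A → Multiset (List A)
  | [], w => {w}
  | u, [] => {u}
  | a :: u, b :: v => (shuffle u (b :: v)).map (a :: ·) + (shuffle (a :: u) v).map (b :: ·)
termination_by u v => u.length + v.length
decreasing_by all_goals simp +arith +decide

/-- The right half-shuffle on words: `u ≻ (v·a) = sh(u ⊗ v)·a`, `u ≻ e = 0`. -/
def succW {A : Type*} (u v : List A) : Multiset (List A) :=
  match v.getLast? with
  | none => 0
  | some a => (shuffle u v.dropLast).map (fun w => w ++ [a])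

/-- The MR product `σ *′ ρ = sh(σ ⊗ ρ̄)` on permutation words, `ρ̄(i) = |σ| + ρ(i)`;
`1ₖ` is the word `List.range k`. -/
def mrW (u v : List ℕ) : Multiset (List ℕ) := shuffle u (v.map (· + u.length))

/-- The half-shuffle of identity permutations: `1_{n₁} ≻ 1_{n₂} = σ ≻ ρ̄` on
permutation words. -/
def succPermW (n₁ n₂ : ℕ) : Multiset (List ℕ) :=
  succW (List.range n₁) ((List.range n₂).map (· + n₁))

/-- The action `σ·(a₁⋯aₙ) = a_{σ1}⋯a_{σn}` of a permutation word on words (0-indexed). -/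
def applyW {A : Type*} [Inhabited A] (σ : List ℕ) (w : List A) : List A :=
  σ.map fun i => w.getD i default

/-- The inverse of a permutation word. -/
def invWord (ρ : List ℕ) : List ℕ := (List.range ρ.length).map fun i => ρ.idxOf i

/-- The adjoint action of a permutation word `ρ` on a homogeneous series:
`ρ · (Σ_w c_w w) = Σ_w c_w (ρ·w)`, i.e. the coefficient at `w` is `c_{ρ⁻¹·w}`. -/
def actSeries {A : Type*} [Inhabited A] {K : Type*} [CommRing K] [Algebra ℚ K]
    (ρ : List ℕ) (s : List A → K) : List A → K :=
  fun w => if w.length = ρ.length then s (applyW (invWord ρ) w) else 0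

def GroupLikeSeries {A : Type*} {K : Type*} [CommRing K] [Algebra ℚ K] (s : List A → K) : Prop :=
  s [] = 1 ∧ ∀ u v : List A, ((shuffle u v).map s).sum = s u * s v

/-- `ŝ` evaluated on a multiset (formal sum) of permutation words:
`ŝ(σ) = Σ_{w} (s, σ·w) w`. -/
def shatM {A : Type*} [Inhabited A] {K : Type*} [CommRing K] [Algebra ℚ K]
    (s : List A → K) (M : Multiset (List ℕ)) : List A → K :=
  fun w => (M.map fun σ => if w.length = σ.length then s (applyW σ w) else 0).sum

/-- The concatenation product of series. -/
def concSeries {A : Type*} {K : Type*} [CommRing K] [Algebra ℚ K]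
    (s t : List A → K) : List A → K :=
  fun w => ∑ k ∈ Finset.range (w.length + 1), s (w.take k) * t (w.drop k)

/-- `ρ_{k₂,j} ∈ S_{n}`: the permutation word exchanging the blocks
`(k₁+1,…,k₁+k₂)` and `(k₁+k₂+1,…,k₁+k₂+j)` inside `(1,…,n)`. -/
def blockSwap (k₁ k₂ j n : ℕ) : List ℕ :=
  List.range k₁ ++ List.range' (k₁ + k₂) j ++ List.range' k₁ k₂ ++
    List.range' (k₁ + k₂ + j) (n - (k₁ + k₂ + j))

section Shuffle

variable {A : Type*}

theorem shuffle_nil_left (v : List A) : shuffle [] v = {v} := by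
  rw [shuffle]

theorem shuffle_nil_right (u : List A) : shuffle u [] = {u} := by
  cases u <;> simp [shuffle]

theorem shuffle_cons_cons (a b : A) (u v : List A) :
    shuffle (a :: u) (b :: v) =
      (shuffle u (b :: v)).map (a :: ·) + (shuffle (a :: u) v).map (b :: ·) := by
  rw [shuffle]

theorem perm_append_of_mem_shuffle {u v x : List A} (hx : x ∈ shuffle u v) :
    x.Perm (u ++ v) := by
  induction u, v using shuffle.induct generalizing x with
  | case1 w => simp_all [shuffle_nil_left]
  | case2 u _ => simp_all [shuffle_nil_right]
  | case3 a u b v ih₁ ih₂ =>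
    rw [shuffle_cons_cons] at hx
    simp only [Multiset.mem_add, Multiset.mem_map] at hx
    rcases hx with ⟨y, hy, rfl⟩ | ⟨y, hy, rfl⟩
    · exact (ih₁ hy).cons a
    · exact ((ih₂ hy).cons b).trans ((List.perm_middle.cons a).trans (.swap b a _)).symm

theorem length_of_mem_shuffle {u v x : List A} (hx : x ∈ shuffle u v) :
    x.length = u.length + v.length := by
  simpa using (perm_append_of_mem_shuffle hx).length_eq

theorem map_map_shuffle {B : Type*} (f : A → B) (u v : List A) :
    (shuffle u v).map (List.map f) = shuffle (u.map f) (v.map f) := by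
  induction u, v using shuffle.induct with
  | case1 w => simp [shuffle_nil_left]
  | case2 u _ => simp [shuffle_nil_right]
  | case3 a u b v ih₁ ih₂ =>
    simp only [List.map_cons] at ih₁ ih₂ ⊢
    rw [shuffle_cons_cons, shuffle_cons_cons, Multiset.map_add, ← ih₁, ← ih₂]
    simp only [Multiset.map_map, Function.comp_def, List.map_cons]

theorem sum_range_succ_take_drop_cons {M : Type*} [AddCommMonoid M] (F : List A → List A → M)
    (a : A) (x : List A) (N : ℕ) :
    ∑ k ∈ Finset.range (N + 1), F ((a :: x).take k) ((a :: x).drop k)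
      = F [] (a :: x) + ∑ k ∈ Finset.range N, F (a :: x.take k) (x.drop k) := by
  rw [Finset.sum_range_succ', add_comm]
  simp only [List.take_succ_cons, List.drop_succ_cons, List.take_zero, List.drop_zero]

theorem sum_shuffle_sum_take_drop {M : Type*} [AddCommMonoid M] (u v : List A)
    (F : List A → List A → M) :
    ((shuffle u v).map fun x => ∑ k ∈ Finset.range (u.length + v.length + 1),
        F (x.take k) (x.drop k)).sum =
      ∑ k₁ ∈ Finset.range (u.length + 1), ∑ k₂ ∈ Finset.range (v.length + 1),
        ((shuffle (u.take k₁) (v.take k₂)).map fun y =>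
          ((shuffle (u.drop k₁) (v.drop k₂)).map fun z => F y z).sum).sum := by
  induction u, v using shuffle.induct generalizing F with
  | case1 w => simp [shuffle_nil_left]
  | case2 u _ => simp [shuffle_nil_right]
  | case3 a u b v ih₁ ih₂ =>
    have h₁ := ih₁ fun y z => F (a :: y) z
    have h₂ := ih₂ fun y z => F (b :: y) z
    simp only [List.length_cons, ← add_assoc, add_right_comm _ 1 v.length] at h₁ h₂ ⊢
    rw [shuffle_cons_cons, Multiset.map_add, Multiset.sum_add, Multiset.map_map,
      Multiset.map_map]
    simp only [Function.comp_def, sum_range_succ_take_drop_cons, Multiset.sum_map_add, h₁, h₂]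
    simp only [Finset.sum_range_succ', List.take_succ_cons, List.drop_succ_cons, List.take_zero,
      List.drop_zero, shuffle_cons_cons, shuffle_nil_left, shuffle_nil_right, Multiset.map_add,
      Multiset.sum_add, Multiset.map_map, Multiset.map_singleton, Multiset.sum_singleton,
      Function.comp_def, Finset.sum_add_distrib]
    abel

end Shuffle

section PermutationWords

variable {A : Type*} [Inhabited A]

theorem length_applyW (σ : List ℕ) (w : List A) : (applyW σ w).length = σ.length :=
  List.length_map _

theorem take_applyW (k : ℕ) (σ : List ℕ) (w : List A) :
    (applyW σ w).take k = applyW (σ.take k) w :=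
  List.map_take.symm

theorem drop_applyW (k : ℕ) (σ : List ℕ) (w : List A) :
    (applyW σ w).drop k = applyW (σ.drop k) w :=
  List.map_drop.symm

theorem applyW_applyW {σ π : List ℕ} (hσ : ∀ i ∈ σ, i < π.length) (w : List A) :
    applyW σ (applyW π w) = applyW (σ.map (π.getD · 0)) w := by
  unfold applyW
  rw [List.map_map]
  refine List.map_congr_left fun i hi => ?_
  rw [Function.comp_apply, List.getD_eq_getElem _ _ (by simpa using hσ i hi), List.getElem_map,
    List.getD_eq_getElem _ _ (hσ i hi)]

theorem invWord_eq_of_getD {ρ σ : List ℕ} (hρ : ρ.Nodup) (hlen : σ.length = ρ.length)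
    (h : ∀ i < ρ.length, σ.getD i 0 < ρ.length ∧ ρ.getD (σ.getD i 0) 0 = i) :
    invWord ρ = σ := by
  refine List.ext_getElem (by simp [invWord, hlen]) fun i hi _ => ?_
  simp only [invWord, List.length_map, List.length_range] at hi
  obtain ⟨hlt, hinv⟩ := h i hi
  rw [List.getD_eq_getElem σ 0 (n := i) (hlen ▸ hi)] at hlt hinv
  rw [List.getD_eq_getElem _ _ hlt] at hinv
  simp only [invWord, List.getElem_map, List.getElem_range]
  conv_lhs => rw [← hinv]
  exact hρ.idxOf_getElem _ _

variable {k₁ k₂ j n : ℕ}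

theorem length_blockSwap (h : k₁ + k₂ + j ≤ n) : (blockSwap k₁ k₂ j n).length = n := by
  simp [blockSwap]
  omega

theorem blockSwap_perm_range (h : k₁ + k₂ + j ≤ n) : (blockSwap k₁ k₂ j n).Perm (List.range n) := by
  have hrange : List.range n = List.range k₁ ++ (List.range' k₁ k₂ ++ List.range' (k₁ + k₂) j) ++
      List.range' (k₁ + k₂ + j) (n - (k₁ + k₂ + j)) := by
    obtain ⟨r, rfl⟩ : ∃ r, n = k₁ + k₂ + j + r := ⟨n - (k₁ + k₂ + j), by omega⟩
    simp only [List.range_add, Nat.add_sub_cancel_left, List.range'_eq_map_range,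
      List.append_assoc]
  rw [hrange, blockSwap, List.append_assoc (List.range k₁)]
  exact (List.perm_append_comm.append_left _).append_right _

theorem getD_blockSwap (h : k₁ + k₂ + j ≤ n) {i : ℕ} (hi : i < n) :
    (blockSwap k₁ k₂ j n).getD i 0 =
      if i < k₁ then i else if i < k₁ + j then i + k₂
      else if i < k₁ + j + k₂ then i - j else i := by
  simp only [blockSwap, List.getD_eq_getElem?_getD, List.getElem?_append, List.length_append,
    List.length_range, List.length_range']
  split_ifs <;> first | omega | (rw [List.getElem?_eq_getElem (by simp; omega)]; simp <;> omega)

theorem invWord_blockSwap (h : k₁ + k₂ + j ≤ n) :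
    invWord (blockSwap k₁ k₂ j n) = blockSwap k₁ j k₂ n := by
  have h' : k₁ + j + k₂ ≤ n := by omega
  refine invWord_eq_of_getD ((blockSwap_perm_range h).nodup_iff.2 List.nodup_range)
    (by rw [length_blockSwap h, length_blockSwap h']) fun i hi => ?_
  rw [length_blockSwap h] at hi ⊢
  rw [getD_blockSwap h' hi]
  split_ifs <;> rw [getD_blockSwap h (by omega)] <;> split_ifs <;> omega

end PermutationWords

section Series

variable {A : Type*} {K : Type*} [CommRing K] [Algebra ℚ K]

theorem concSeries_eq_add_sum (s t : List A → K) (ht : t [] = 1) (v : List A) :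
    concSeries s t v = s v + ∑ k ∈ Finset.range v.length, s (v.take k) * t (v.drop k) := by
  rw [concSeries, Finset.sum_range_succ, List.take_length, List.drop_length, ht, mul_one,
    add_comm]

theorem concSeries_append_of_length_eq {s : List A → K} {L : ℕ} (hs : ∀ u, u.length ≠ L → s u = 0)
    (t : List A → K) {p : List A} (hp : p.length = L) (q : List A) :
    concSeries s t (p ++ q) = s p * t q := by
  rw [concSeries, Finset.sum_eq_single L (fun k hk hkL => ?_) (fun hL => ?_),
    List.take_left' hp, List.drop_left' hp]
  · rw [hs _ (by simp at hk ⊢; omega), zero_mul]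
  · simp [hp] at hL

variable [Inhabited A]

theorem shatM_eq_sum_of_length_eq (s : List A → K) {M : Multiset (List ℕ)} {w : List A}
    (hM : ∀ σ ∈ M, σ.length = w.length) : shatM s M w = (M.map fun σ => s (applyW σ w)).sum :=
  congrArg Multiset.sum <| Multiset.map_congr rfl fun σ hσ => if_pos (hM σ hσ).symm

theorem shatM_eq_zero_of_length_ne (s : List A → K) {M : Multiset (List ℕ)} {L : ℕ}
    (hM : ∀ σ ∈ M, σ.length = L) {w : List A} (hw : w.length ≠ L) : shatM s M w = 0 :=
  Multiset.sum_eq_zero fun x hx => by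
    obtain ⟨σ, hσ, rfl⟩ := Multiset.mem_map.1 hx
    exact if_neg (hM σ hσ ▸ hw)

theorem shatM_applyW (s : List A → K) {M : Multiset (List ℕ)} {π : List ℕ}
    (hM : ∀ σ ∈ M, σ.Perm (List.range π.length)) (w : List A) :
    shatM s M (applyW π w) = (M.map fun σ => s (applyW (σ.map (π.getD · 0)) w)).sum := by
  rw [shatM_eq_sum_of_length_eq s fun σ hσ => by simpa [length_applyW] using (hM σ hσ).length_eq]
  refine congrArg Multiset.sum <| Multiset.map_congr rfl fun σ hσ => ?_
  rw [applyW_applyW fun i hi => by simpa using (hM σ hσ).subset hi]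

end Series

section PermutationMultisets

theorem range_append_map_add_range (a b : ℕ) :
    List.range a ++ (List.range b).map (· + a) = List.range (a + b) := by
  simp [List.range_add, add_comm]

theorem perm_range_of_mem_mrW {a b : ℕ} {σ : List ℕ} (hσ : σ ∈ mrW (List.range a) (List.range b)) :
    σ.Perm (List.range (a + b)) := by
  simpa [range_append_map_add_range] using perm_append_of_mem_shuffle hσ

theorem succPermW_succ (n₁ m : ℕ) :
    succPermW n₁ (m + 1) = (shuffle (List.range n₁) ((List.range m).map (· + n₁))).map
      (· ++ [n₁ + m]) := by
  rw [succPermW, succW, List.range_succ, List.map_append]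
  simp only [List.map_cons, List.map_nil, List.getLast?_concat, List.dropLast_concat, add_comm m]

theorem perm_range_of_mem_succPermW {a b : ℕ} {σ : List ℕ} (hσ : σ ∈ succPermW a (b + 1)) :
    σ.Perm (List.range (a + b + 1)) := by
  rw [succPermW_succ] at hσ
  obtain ⟨x, hx, rfl⟩ := Multiset.mem_map.1 hσ
  rw [List.range_succ, ← range_append_map_add_range]
  exact (perm_append_of_mem_shuffle hx).append_right _

end PermutationMultisets

section Relabelling

theorem map_map_getD_shuffle_range {P Q π : List ℕ} {a b : ℕ} (hP : P.length = a)
    (hQ : Q.length = b) (hπ : P ++ Q <+: π) :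
    (shuffle (List.range a) ((List.range b).map (· + a))).map (List.map (π.getD · 0)) =
      shuffle P Q := by
  obtain ⟨R, rfl⟩ := hπ
  subst hP hQ
  rw [map_map_shuffle]
  congr 1 <;> refine List.ext_getElem (by simp) fun i h₁ _ => ?_ <;> simp at h₁ <;>
    simp [List.getD_eq_getElem?_getD, List.getElem?_append, h₁]

variable {A : Type*} [Inhabited A] {K : Type*} [CommRing K] [Algebra ℚ K] {P Q : List ℕ}
  {a b : ℕ}

theorem shatM_mrW_applyW_append (s : List A → K) (hP : P.length = a) (hQ : Q.length = b)
    (w : List A) :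
    shatM s (mrW (List.range a) (List.range b)) (applyW (P ++ Q) w) =
      ((shuffle P Q).map fun y => s (applyW y w)).sum := by
  rw [shatM_applyW s fun σ hσ => by simpa [hP, hQ] using perm_range_of_mem_mrW hσ, mrW,
    List.length_range, ← map_map_getD_shuffle_range hP hQ List.prefix_rfl, Multiset.map_map]
  rfl

theorem shatM_succPermW_applyW_append (t : List A → K) (hP : P.length = a) (hQ : Q.length = b)
    (c : ℕ) (w : List A) :
    shatM t (succPermW a (b + 1)) (applyW (P ++ Q ++ [c]) w) =
      ((shuffle P Q).map fun z => t (applyW (z ++ [c]) w)).sum := by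
  rw [shatM_applyW t fun σ hσ => by simpa [hP, hQ, add_assoc] using perm_range_of_mem_succPermW hσ,
    succPermW_succ, Multiset.map_map,
    ← map_map_getD_shuffle_range hP hQ (List.prefix_append _ [c]), Multiset.map_map]
  refine congrArg Multiset.sum (Multiset.map_congr rfl fun x _ => ?_)
  rw [Function.comp_apply, Function.comp_apply, List.map_append, List.map_singleton,
    List.getD_append_right _ _ _ _ (by simp [hP, hQ])]
  simp [hP, hQ]

end Relabelling

section ChangeOfVariables

variable {A : Type*} [Inhabited A] {K : Type*} [CommRing K] [Algebra ℚ K] (s t : List A → K)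
  {n₁ m k₁ k₂ : ℕ} {w : List A}

theorem take_blockSwap_eq_take_append_take (hk₁ : k₁ ≤ n₁) (hk₂ : k₂ ≤ m) :
    (blockSwap k₁ (n₁ - k₁) k₂ (n₁ + (m + 1))).take (k₁ + k₂) =
      (List.range n₁).take k₁ ++ ((List.range m).map (· + n₁)).take k₂ := by
  refine List.ext_getElem (by simp [blockSwap]; omega) fun i h₁ _ => ?_
  simp [blockSwap] at h₁
  simp only [blockSwap, List.getElem_append, List.getElem_take, List.getElem_range,
    List.getElem_range', List.getElem_map, List.length_append, List.length_range,
    List.length_range', List.length_take]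
  split_ifs <;> omega

theorem drop_blockSwap_eq_drop_append_drop (hk₁ : k₁ ≤ n₁) (hk₂ : k₂ ≤ m) :
    (blockSwap k₁ (n₁ - k₁) k₂ (n₁ + (m + 1))).drop (k₁ + k₂) =
      (List.range n₁).drop k₁ ++ ((List.range m).map (· + n₁)).drop k₂ ++ [n₁ + m] := by
  refine List.ext_getElem (by simp [blockSwap]; omega) fun i h₁ _ => ?_
  simp [blockSwap] at h₁
  simp only [blockSwap, List.getElem_append, List.getElem_drop, List.getElem_range,
    List.getElem_range', List.getElem_map, List.length_append, List.length_range,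
    List.length_range', List.length_drop, List.length_map, List.getElem_singleton]
  split_ifs <;> omega

theorem shatM_succPermW_succ (f : List A → K) (hw : w.length = n₁ + m + 1) :
    shatM f (succPermW n₁ (m + 1)) w =
      ((shuffle (List.range n₁) ((List.range m).map (· + n₁))).map
        fun x => f (applyW (x ++ [n₁ + m]) w)).sum := by
  rw [shatM_eq_sum_of_length_eq f fun σ hσ => by
      simpa [hw] using (perm_range_of_mem_succPermW hσ).length_eq,
    succPermW_succ, Multiset.map_map]
  rfl

theorem concSeries_sub_applyW_append (ht : t [] = 1) (x : List ℕ) (c : ℕ) (w : List A) :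
    concSeries s t (applyW (x ++ [c]) w) - s (applyW (x ++ [c]) w) =
      ∑ k ∈ Finset.range (x.length + 1),
        s (applyW (x.take k) w) * t (applyW (x.drop k ++ [c]) w) := by
  rw [concSeries_eq_add_sum s t ht, add_sub_cancel_left, length_applyW, List.length_append,
    List.length_singleton]
  refine Finset.sum_congr rfl fun k hk => ?_
  have hk : k ≤ x.length := Nat.lt_succ_iff.1 (Finset.mem_range.1 hk)
  rw [take_applyW, drop_applyW, List.take_append_of_le_length hk,
    List.drop_append_of_le_length hk]

theorem shatM_concSeries_sub_shatM_succPermW (ht : t [] = 1) (hw : w.length = n₁ + m + 1) :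
    shatM (concSeries s t) (succPermW n₁ (m + 1)) w - shatM s (succPermW n₁ (m + 1)) w =
      ∑ k₁ ∈ Finset.range (n₁ + 1), ∑ k₂ ∈ Finset.range (m + 1),
        ((shuffle ((List.range n₁).take k₁) (((List.range m).map (· + n₁)).take k₂)).map
          fun y => s (applyW y w)).sum *
        ((shuffle ((List.range n₁).drop k₁) (((List.range m).map (· + n₁)).drop k₂)).map
          fun z => t (applyW (z ++ [n₁ + m]) w)).sum := by
  rw [shatM_succPermW_succ _ hw, shatM_succPermW_succ _ hw, ← Multiset.sum_map_sub,
    Multiset.map_congr rfl fun x hx => by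
      rw [concSeries_sub_applyW_append s t ht, length_of_mem_shuffle hx]]
  have hcut := sum_shuffle_sum_take_drop (List.range n₁) ((List.range m).map (· + n₁))
    fun y z => s (applyW y w) * t (applyW (z ++ [n₁ + m]) w)
  simp only [List.length_range, List.length_map] at hcut ⊢
  simp only [hcut, Multiset.sum_map_mul_left, Multiset.sum_map_mul_right]

theorem actSeries_blockSwap_concSeries (hk₁ : k₁ ≤ n₁) (hk₂ : k₂ ≤ m)
    (hw : w.length = n₁ + m + 1) :
    actSeries (blockSwap k₁ k₂ (n₁ - k₁) (n₁ + (m + 1)))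
      (concSeries (shatM s (mrW (List.range k₁) (List.range k₂)))
        (shatM t (succPermW (n₁ - k₁) (m + 1 - k₂)))) w =
      ((shuffle ((List.range n₁).take k₁) (((List.range m).map (· + n₁)).take k₂)).map
          fun y => s (applyW y w)).sum *
        ((shuffle ((List.range n₁).drop k₁) (((List.range m).map (· + n₁)).drop k₂)).map
          fun z => t (applyW (z ++ [n₁ + m]) w)).sum := by
  have hρ : (blockSwap k₁ (n₁ - k₁) k₂ (n₁ + (m + 1))).length = n₁ + (m + 1) :=
    length_blockSwap (by omega)
  have hS (u : List A) (hu : u.length ≠ k₁ + k₂) :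
      shatM s (mrW (List.range k₁) (List.range k₂)) u = 0 :=
    shatM_eq_zero_of_length_ne s
      (fun σ hσ => (perm_range_of_mem_mrW hσ).length_eq.trans List.length_range) hu
  rw [actSeries, if_pos (by rw [length_blockSwap (by omega)]; omega),
    invWord_blockSwap (by omega),
    ← List.take_append_drop (k₁ + k₂) (applyW (blockSwap k₁ (n₁ - k₁) k₂ (n₁ + (m + 1))) w),
    concSeries_append_of_length_eq hS _ (by simp [length_applyW]; omega), take_applyW,
    drop_applyW, take_blockSwap_eq_take_append_take hk₁ hk₂,
    drop_blockSwap_eq_drop_append_drop hk₁ hk₂, show m + 1 - k₂ = m - k₂ + 1 by omega,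
    shatM_mrW_applyW_append s (by simp; omega) (by simp; omega),
    shatM_succPermW_applyW_append t (by simp) (by simp)]

end ChangeOfVariables

theorem change_of_variables_abstract_iterated_integrals_general
    {A : Type*} [Inhabited A] {K : Type*} [CommRing K] [Algebra ℚ K]
    (s t : List A → K) (ht : GroupLikeSeries t)
    (n₁ n₂ : ℕ) (hn₂ : 1 ≤ n₂) (w : List A) :
    shatM (concSeries s t) (succPermW n₁ n₂) w - shatM s (succPermW n₁ n₂) w =
      ∑ k₁ ∈ Finset.range (n₁ + 1), ∑ k₂ ∈ Finset.range n₂,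
        actSeries (blockSwap k₁ k₂ (n₁ - k₁) (n₁ + n₂))
          (concSeries (shatM s (mrW (List.range k₁) (List.range k₂)))
            (shatM t (succPermW (n₁ - k₁) (n₂ - k₂)))) w := by
  obtain ⟨m, rfl⟩ : ∃ m, n₂ = m + 1 := ⟨n₂ - 1, by omega⟩
  by_cases hw : w.length = n₁ + m + 1
  · rw [shatM_concSeries_sub_shatM_succPermW s t ht.1 hw]
    refine Finset.sum_congr rfl fun k₁ hk₁ => Finset.sum_congr rfl fun k₂ hk₂ => ?_
    rw [Finset.mem_range] at hk₁ hk₂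
    exact (actSeries_blockSwap_concSeries s t (by omega) (by omega) hw).symm
  · have hzero (f : List A → K) : shatM f (succPermW n₁ (m + 1)) w = 0 :=
      shatM_eq_zero_of_length_ne f
        (fun σ hσ => (perm_range_of_mem_succPermW hσ).length_eq.trans List.length_range) hw
    rw [hzero, hzero, sub_self]
    refine (Finset.sum_eq_zero fun k₁ hk₁ => Finset.sum_eq_zero fun k₂ hk₂ => if_neg ?_).symm
    rw [Finset.mem_range] at hk₁ hk₂
    rw [length_blockSwap (by omega)]
    exact hw

/-- change of variables for abstract iterated integrals: for group-like
`s, t` and `n₁ ≥ 0`, `n₂ ≥ 1`,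
`(st)^(1_{n₁} ≻ 1_{n₂}) − ŝ(1_{n₁} ≻ 1_{n₂})
  = Σ_{k₁=0}^{n₁} Σ_{k₂=0}^{n₂−1} ρ_{k₂,n₁−k₁} · conc(ŝ(1_{k₁} *′ 1_{k₂}) ⊗ t̂(1_{n₁−k₁} ≻ 1_{n₂−k₂}))`. -/
theorem change_of_variables_abstract_iterated_integrals
    {A : Type*} [Inhabited A] {K : Type*} [CommRing K] [Algebra ℚ K]
    (s t : List A → K) (hs : GroupLikeSeries s) (ht : GroupLikeSeries t)
    (n₁ n₂ : ℕ) (hn₂ : 1 ≤ n₂) (w : List A) :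
    shatM (concSeries s t) (succPermW n₁ n₂) w - shatM s (succPermW n₁ n₂) w =
      ∑ k₁ ∈ Finset.range (n₁ + 1), ∑ k₂ ∈ Finset.range n₂,
        actSeries (blockSwap k₁ k₂ (n₁ - k₁) (n₁ + n₂))
          (concSeries (shatM s (mrW (List.range k₁) (List.range k₂)))
            (shatM t (succPermW (n₁ - k₁) (n₂ - k₂)))) w :=
  change_of_variables_abstract_iterated_integrals_general s t ht n₁ n₂ hn₂ w
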